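/- arXiv:2601.19809 — 3 statements merged into one kernel-verified Lean document; each statement's English description precedes it below -/
import Mathlib

section
/- Coincidence lemma: For every product rule P, a series f is P-finite if, and only if, f is recognised by a finite-variable P-automaton, i.e., there exists a P-automaton 𝒜 = (X, F, Δ) with X finite and a variable x ∈ X such that ⟦x⟧_𝒜 = f. -/
namespace PSeries

/-- A (formal power) series over alphabet `A` with rational coefficients. -/
abbrev Series (A : Type) : Type := List A → ℚ

/-- Left derivative of a series by a letter. -/
def deriv {A : Type} (a : A) (f : Series A) : Series A := fun w => f (a :: w)

/-- Right derivative of a series by a letter. -/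
def derivR {A : Type} (b : A) (f : Series A) : Series A := fun w => f (w ++ [b])

/-- Reversal of a series. -/
def rev {A : Type} (f : Series A) : Series A := fun w => f w.reverse

/-- Terms over a set of variables `X`:  `u ::= x | 0 | c·u | u + v | u * v`. -/
inductive Term (X : Type) : Type
  | var : X → Term X
  | zero : Term X
  | smul : ℚ → Term X → Term X
  | add : Term X → Term X → Term X
  | mul : Term X → Term X → Term X

namespace Term

/-- Simultaneous substitution of terms for variables. -/
def subst {X Y : Type} : Term X → (X → Term Y) → Term Y
  | var x, ρ => ρ x
  | zero, _ => zero
  | smul c u, ρ => smul c (u.subst ρ)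
  | add u v, ρ => add (u.subst ρ) (v.subst ρ)
  | mul u v, ρ => mul (u.subst ρ) (v.subst ρ)

/-- Semantics of a term on series, with the product symbol interpreted by `m`. -/
def evalS {A X : Type} (m : Series A → Series A → Series A) :
    Term X → (X → Series A) → Series A
  | var x, ρ => ρ x
  | zero, _ => 0
  | smul c u, ρ => c • u.evalS m ρ
  | add u v, ρ => u.evalS m ρ + v.evalS m ρ
  | mul u v, ρ => m (u.evalS m ρ) (v.evalS m ρ)

/-- Evaluation of a term in the rationals (product is rational multiplication). -/
def evalQ {X : Type} : Term X → (X → ℚ) → ℚ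
  | var x, F => F x
  | zero, _ => 0
  | smul c u, F => c * u.evalQ F
  | add u v, F => u.evalQ F + v.evalQ F
  | mul u v, F => u.evalQ F * v.evalQ F

/-- Evaluation of a term in a commutative `ℚ`-algebra. -/
def evalA {R : Type} [CommRing R] [Algebra ℚ R] {X : Type} :
    Term X → (X → R) → R
  | var x, ρ => ρ x
  | zero, _ => 0
  | smul c u, ρ => c • u.evalA ρ
  | add u v, ρ => u.evalA ρ + v.evalA ρ
  | mul u v, ρ => u.evalA ρ * v.evalA ρ

end Term

/-- `m` is the `P`-product for the product rule `P`; that is, `m` satisfies the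
two defining equations `(f*g)(ε) = f(ε)·g(ε)` and `δ_a (f*g) = P(f, δ_a f, g, δ_a g)`. -/
def IsPProduct {A : Type} (P : Term (Fin 4)) (m : Series A → Series A → Series A) : Prop :=
  (∀ f g : Series A, m f g [] = f [] * g []) ∧
  (∀ (f g : Series A) (a : A),
    deriv a (m f g) = P.evalS m ![f, deriv a f, g, deriv a g])

/-- The smallest congruence on terms generated by the axioms of
commutative (not necessarily unital) `ℚ`-algebras. -/
inductive TEq {X : Type} : Term X → Term X → Prop
  | refl (u : Term X) : TEq u u
  | symm {u v : Term X} : TEq u v → TEq v u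
  | trans {u v w : Term X} : TEq u v → TEq v w → TEq u w
  | smul_congr (c : ℚ) {u v : Term X} : TEq u v → TEq (.smul c u) (.smul c v)
  | add_congr {u u' v v' : Term X} : TEq u u' → TEq v v' → TEq (.add u v) (.add u' v')
  | mul_congr {u u' v v' : Term X} : TEq u u' → TEq v v' → TEq (.mul u v) (.mul u' v')
  | one_smul (u : Term X) : TEq (.smul 1 u) u
  | smul_smul (c d : ℚ) (u : Term X) : TEq (.smul c (.smul d u)) (.smul (c * d) u)
  | add_smul (c d : ℚ) (u : Term X) : TEq (.smul (c + d) u) (.add (.smul c u) (.smul d u))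
  | smul_add (c : ℚ) (u v : Term X) : TEq (.smul c (.add u v)) (.add (.smul c u) (.smul c v))
  | add_zero (u : Term X) : TEq (.add u .zero) u
  | add_assoc (u v w : Term X) : TEq (.add (.add u v) w) (.add u (.add v w))
  | add_comm (u v : Term X) : TEq (.add u v) (.add v u)
  | neg_cancel (u : Term X) : TEq (.add u (.smul (-1) u)) .zero
  | mul_addl (u v w : Term X) : TEq (.mul (.add u v) w) (.add (.mul u w) (.mul v w))
  | mul_smull (c : ℚ) (u v : Term X) : TEq (.mul (.smul c u) v) (.smul c (.mul u v))
  | mul_assoc (u v w : Term X) : TEq (.mul (.mul u v) w) (.mul u (.mul v w))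
  | mul_comm (u v : Term X) : TEq (.mul u v) (.mul v u)

/-- A product rule `P` (a term over the variables `x = 0, ẋ = 1, y = 2, ẏ = 3`)
is special: it satisfies (P-add), (P-assoc) and (P-comm) up to the congruence `TEq`.
In the first two equations the six variables are `x = 0, ẋ = 1, y = 2, ẏ = 3, z = 4, ż = 5`. -/
def Special (P : Term (Fin 4)) : Prop :=
  TEq (P.subst (![.add (.var 0) (.var 2), .add (.var 1) (.var 3), .var 4, .var 5] :
        Fin 4 → Term (Fin 6)))
      (.add (P.subst (![.var 0, .var 1, .var 4, .var 5] : Fin 4 → Term (Fin 6)))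
            (P.subst (![.var 2, .var 3, .var 4, .var 5] : Fin 4 → Term (Fin 6)))) ∧
  TEq (P.subst (![.var 0, .var 1, .mul (.var 2) (.var 4),
        P.subst (![.var 2, .var 3, .var 4, .var 5] : Fin 4 → Term (Fin 6))] :
        Fin 4 → Term (Fin 6)))
      (P.subst (![.mul (.var 0) (.var 2),
        P.subst (![.var 0, .var 1, .var 2, .var 3] : Fin 4 → Term (Fin 6)), .var 4, .var 5] :
        Fin 4 → Term (Fin 6))) ∧
  TEq P (P.subst (![.var 2, .var 3, .var 0, .var 1] : Fin 4 → Term (Fin 4)))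

/-- A binary operation on series is bilinear, associative and commutative. -/
def IsBAC {A : Type} (m : Series A → Series A → Series A) : Prop :=
  (∀ f g h : Series A, m (f + g) h = m f h + m g h) ∧
  (∀ (c : ℚ) (f g : Series A), m (c • f) g = c • m f g) ∧
  (∀ f g h : Series A, m f (g + h) = m f g + m f h) ∧
  (∀ (c : ℚ) (f g : Series A), m f (c • g) = c • m f g) ∧
  (∀ f g h : Series A, m (m f g) h = m f (m g h)) ∧
  (∀ f g : Series A, m f g = m g f)

/-- The smallest set of series containing `0` and the generators `G`, closed under
scalar multiplication, addition, and the product `m`. -/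
inductive InAlg {A : Type} (m : Series A → Series A → Series A) (G : Set (Series A)) :
    Series A → Prop
  | zero : InAlg m G 0
  | gen {g : Series A} : g ∈ G → InAlg m G g
  | smul (c : ℚ) {f : Series A} : InAlg m G f → InAlg m G (c • f)
  | add {f g : Series A} : InAlg m G f → InAlg m G g → InAlg m G (f + g)
  | mul {f g : Series A} : InAlg m G f → InAlg m G g → InAlg m G (m f g)

/-- `f` is `P`-finite (w.r.t. the `P`-product `m`): there are finitely many generators
`g 0 = f, g 1, …` all of whose left derivatives lie in the algebra they generate. -/
def PFinite {A : Type} (m : Series A → Series A → Series A) (f : Series A) : Prop :=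
  ∃ (k : ℕ) (g : Fin (k + 1) → Series A),
    g 0 = f ∧ ∀ (i : Fin (k + 1)) (a : A), InAlg m (Set.range g) (deriv a (g i))

/-- A `P`-automaton: output function `out` and transition function `tr`. -/
structure PAutomaton (A X : Type) where
  out : X → ℚ
  tr : A → X → Term X

/-- The `P`-extension of a function `D : X → Term X` to all terms. -/
def pext {X : Type} (P : Term (Fin 4)) (D : X → Term X) : Term X → Term X
  | .var x => D x
  | .zero => .zero
  | .smul c u => .smul c (pext P D u)
  | .add u v => .add (pext P D u) (pext P D v)
  | .mul u v => P.subst ![u, pext P D u, v, pext P D v]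

/-- Homomorphic extension of the output function of a `P`-automaton to all terms. -/
def PAutomaton.outT {A X : Type} (𝒜 : PAutomaton A X) (u : Term X) : ℚ :=
  u.evalQ 𝒜.out

/-- Extension of the (`P`-extended) transition function of a `P`-automaton to words. -/
def trWord {A X : Type} (P : Term (Fin 4)) (𝒜 : PAutomaton A X) :
    List A → Term X → Term X
  | [], u => u
  | a :: w, u => trWord P 𝒜 w (pext P (𝒜.tr a) u)

/-- The semantics of a `P`-automaton: the unique map with `⟦α⟧(ε) = F(α)` and
`δ_a ⟦α⟧ = ⟦Δ̃_a α⟧`; concretely, `⟦α⟧(w) = F(Δ̃_w α)`. -/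
def asem {A X : Type} (P : Term (Fin 4)) (𝒜 : PAutomaton A X) (u : Term X) : Series A :=
  fun w => (trWord P 𝒜 w u).evalQ 𝒜.out

/-- `ℚ[X]⁰`: polynomials in commuting variables `X` with zero constant term. -/
noncomputable def Aug (X : Type) : Submodule ℚ (MvPolynomial X ℚ) where
  carrier := {p | MvPolynomial.coeff 0 p = 0}
  add_mem' := by
    intro a b ha hb
    simp only [Set.mem_setOf_eq, MvPolynomial.coeff_add] at *
    rw [ha, hb, add_zero]
  zero_mem' := by simp
  smul_mem' := by
    intro c p hp
    simp only [Set.mem_setOf_eq, MvPolynomial.coeff_smul] at *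
    rw [hp, smul_zero]

/-- The variable `x` as an element of `ℚ[X]⁰`. -/
noncomputable def Aug.var {X : Type} (x : X) : Aug X :=
  ⟨MvPolynomial.X x, by
    show MvPolynomial.coeff 0 (MvPolynomial.X x) = 0
    simp [MvPolynomial.coeff_X']⟩

/-- The product of two elements of `ℚ[X]⁰`, again in `ℚ[X]⁰`. -/
noncomputable def Aug.mul {X : Type} (p q : Aug X) : Aug X :=
  ⟨(p : MvPolynomial X ℚ) * (q : MvPolynomial X ℚ), by
    show MvPolynomial.coeff 0 _ = 0
    have hp : MvPolynomial.constantCoeff (p : MvPolynomial X ℚ) = 0 := p.2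
    have hq : MvPolynomial.constantCoeff (q : MvPolynomial X ℚ) = 0 := q.2
    have := map_mul MvPolynomial.constantCoeff (p : MvPolynomial X ℚ) (q : MvPolynomial X ℚ)
    simpa [MvPolynomial.constantCoeff_eq, hp, hq] using this⟩

/-- A polynomial `P`-automaton over variables `X`. -/
structure PolyAutomaton (A X : Type) where
  out : X → ℚ
  tr : A → X → Aug X

/-- Extension to words of a family of (extended) transition maps on `ℚ[X]⁰`. -/
noncomputable def trWordP {A X : Type} (Dt : A → (Aug X →ₗ[ℚ] Aug X)) : List A → Aug X → Aug X
  | [], p => p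
  | a :: w, p => trWordP Dt w (Dt a p)

/-- The ideal of `ℚ[X]` generated by all polynomials reachable from the initial
variable `x1` by words of length at most `n`. -/
noncomputable def reachIdeal {A X : Type} (Dt : A → (Aug X →ₗ[ℚ] Aug X)) (x1 : X) (n : ℕ) :
    Ideal (MvPolynomial X ℚ) :=
  Ideal.span {p : MvPolynomial X ℚ |
    ∃ w : List A, w.length ≤ n ∧ p = ((trWordP Dt w (Aug.var x1) : Aug X) : MvPolynomial X ℚ)}



section Coincidence

variable {A X : Type} {m : Series A → Series A → Series A}

/-- Evaluation at the empty word is evaluation in `ℚ`. -/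
lemma evalS_nil {P : Term (Fin 4)} (hm : IsPProduct P m) (u : Term X) (σ : X → Series A) :
    u.evalS m σ [] = u.evalQ (fun x => σ x []) := by
  induction u with
  | var x => rfl
  | zero => rfl
  | smul c u ih => simp only [Term.evalS, Term.evalQ, Pi.smul_apply, smul_eq_mul, ih]
  | add u v ihu ihv => simp only [Term.evalS, Term.evalQ, Pi.add_apply, ihu, ihv]
  | mul u v ihu ihv => simp only [Term.evalS, Term.evalQ, hm.1, ihu, ihv]

/-- Locality of term evaluation, given locality of the product. -/
lemma eLoc {n : ℕ}
    (hML : ∀ f f' g g' : Series A, (∀ w, w.length ≤ n → f w = f' w) →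
      (∀ w, w.length ≤ n → g w = g' w) → ∀ w, w.length ≤ n → m f g w = m f' g' w)
    {Y : Type} (u : Term Y) {ρ ρ' : Y → Series A}
    (h : ∀ y w, w.length ≤ n → ρ y w = ρ' y w) :
    ∀ w, w.length ≤ n → u.evalS m ρ w = u.evalS m ρ' w := by
  induction u with
  | var y => exact h y
  | zero => intro w hw; rfl
  | smul c u ih =>
      intro w hw
      simp only [Term.evalS, Pi.smul_apply, smul_eq_mul]
      rw [ih w hw]
  | add u v ihu ihv =>
      intro w hw
      simp only [Term.evalS, Pi.add_apply]
      rw [ihu w hw, ihv w hw]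
  | mul u v ihu ihv => exact fun w hw => hML _ _ _ _ ihu ihv w hw

/-- Locality of a `P`-product: its value on words of length `≤ n` depends only on the
values of the arguments on words of length `≤ n`. -/
lemma mLoc {P : Term (Fin 4)} (hm : IsPProduct P m) : ∀ n : ℕ, ∀ f f' g g' : Series A,
    (∀ w, w.length ≤ n → f w = f' w) → (∀ w, w.length ≤ n → g w = g' w) →
    ∀ w, w.length ≤ n → m f g w = m f' g' w := by
  intro n
  induction n with
  | zero =>
      intro f f' g g' hf hg w hw
      have hwnil : w = [] := List.length_eq_zero_iff.mp (Nat.le_zero.mp hw)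
      subst hwnil
      rw [hm.1, hm.1, hf [] (by simp), hg [] (by simp)]
  | succ n ihn =>
      intro f f' g g' hf hg w hw
      match w with
      | [] => rw [hm.1, hm.1, hf [] (by simp), hg [] (by simp)]
      | a :: w' =>
          have hw' : w'.length ≤ n := by simpa using hw
          have h1 : m f g (a :: w') = deriv a (m f g) w' := rfl
          have h2 : m f' g' (a :: w') = deriv a (m f' g') w' := rfl
          rw [h1, h2, hm.2, hm.2]
          refine eLoc ihn P ?_ w' hw'
          intro y w hw2
          have hw2' : w.length ≤ n + 1 := le_trans hw2 (Nat.le_succ n)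
          fin_cases y <;>
            simp only [Matrix.cons_val_zero, Matrix.cons_val_one, Matrix.head_cons,
              Matrix.cons_val_two, Matrix.tail_cons, Matrix.cons_val_three, deriv]
          · exact hf w hw2'
          · exact hf (a :: w) (by simpa using hw2)
          · exact hg w hw2'
          · exact hg (a :: w) (by simpa using hw2)

/-- Substitution lemma for term evaluation. -/
lemma subst_evalS {Y : Type} (Q : Term Y) (σ : Y → Term X) (ρ : X → Series A) :
    (Q.subst σ).evalS m ρ = Q.evalS m (fun y => (σ y).evalS m ρ) := by
  induction Q with
  | var y => rfl
  | zero => rfl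
  | smul c u ih => simp only [Term.subst, Term.evalS, ih]
  | add u v ihu ihv => simp only [Term.subst, Term.evalS, ihu, ihv]
  | mul u v ihu ihv => simp only [Term.subst, Term.evalS, ihu, ihv]

/-- Key lemma: the semantics of a `P`-automaton is term evaluation (with the `P`-product)
in the environment given by the semantics of the variables. -/
lemma asem_key {P : Term (Fin 4)} (hm : IsPProduct P m) (𝒜 : PAutomaton A X) :
    ∀ (n : ℕ) (w : List A), w.length ≤ n → ∀ u : Term X,
      asem P 𝒜 u w = u.evalS m (fun x => asem P 𝒜 (.var x)) w := by
  intro n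
  induction n with
  | zero =>
      intro w hw u
      have hwnil : w = [] := List.length_eq_zero_iff.mp (Nat.le_zero.mp hw)
      subst hwnil
      rw [evalS_nil hm]
      rfl
  | succ n ihn =>
      have step : ∀ (a : A) (u : Term X) (w : List A), w.length ≤ n →
          (pext P (𝒜.tr a) u).evalS m (fun x => asem P 𝒜 (.var x)) w =
            deriv a (u.evalS m (fun x => asem P 𝒜 (.var x))) w := by
        intro a u
        induction u with
        | var x =>
            intro w hw
            show (𝒜.tr a x).evalS m (fun x => asem P 𝒜 (.var x)) w
              = asem P 𝒜 (Term.var x) (a :: w)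
            have h1 : asem P 𝒜 (Term.var x) (a :: w) = asem P 𝒜 (𝒜.tr a x) w := rfl
            rw [h1, ihn w hw]
        | zero => intro w hw; rfl
        | smul c u ih =>
            intro w hw
            show (c • (pext P (𝒜.tr a) u).evalS m _) w = (c • u.evalS m _) (a :: w)
            simp only [Pi.smul_apply, smul_eq_mul]
            rw [ih w hw]
            rfl
        | add u v ihu ihv =>
            intro w hw
            show ((pext P (𝒜.tr a) u).evalS m _ + (pext P (𝒜.tr a) v).evalS m _) w
              = (u.evalS m _ + v.evalS m _) (a :: w)
            simp only [Pi.add_apply]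
            rw [ihu w hw, ihv w hw]
            rfl
        | mul u v ihu ihv =>
            intro w hw
            show (P.subst ![u, pext P (𝒜.tr a) u, v, pext P (𝒜.tr a) v]).evalS m _ w
              = deriv a (m (u.evalS m _) (v.evalS m _)) w
            rw [subst_evalS, hm.2]
            refine eLoc (mLoc hm n) P ?_ w hw
            intro y w2 hw2
            fin_cases y <;>
              simp only [Matrix.cons_val_zero, Matrix.cons_val_one, Matrix.head_cons,
                Matrix.cons_val_two, Matrix.tail_cons, Matrix.cons_val_three]
            · rfl
            · exact ihu w2 hw2
            · rfl
            · exact ihv w2 hw2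
      intro w hw u
      match w with
      | [] => exact ihn [] (by simp) u
      | a :: w' =>
          have hw' : w'.length ≤ n := by simpa using hw
          calc asem P 𝒜 u (a :: w')
              = asem P 𝒜 (pext P (𝒜.tr a) u) w' := rfl
            _ = (pext P (𝒜.tr a) u).evalS m (fun x => asem P 𝒜 (.var x)) w' := ihn w' hw' _
            _ = deriv a (u.evalS m (fun x => asem P 𝒜 (.var x))) w' := step a u w' hw'
            _ = u.evalS m (fun x => asem P 𝒜 (.var x)) (a :: w') := rfl

lemma asem_eq {P : Term (Fin 4)} (hm : IsPProduct P m) (𝒜 : PAutomaton A X) (u : Term X) :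
    asem P 𝒜 u = u.evalS m (fun x => asem P 𝒜 (.var x)) :=
  funext fun w => asem_key hm 𝒜 w.length w le_rfl u

/-- Every element of the algebra generated by `g 0, …, g k` is the value of a term. -/
lemma inAlg_exists_term {k : ℕ} (g : Fin k → Series A) {h : Series A}
    (hh : InAlg m (Set.range g) h) : ∃ u : Term (Fin k), u.evalS m g = h := by
  induction hh with
  | zero => exact ⟨.zero, rfl⟩
  | gen hg => obtain ⟨j, hj⟩ := hg; exact ⟨.var j, hj⟩
  | smul c _ ih => obtain ⟨u, hu⟩ := ih; exact ⟨.smul c u, by simp only [Term.evalS, hu]⟩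
  | add _ _ ihu ihv =>
      obtain ⟨u, hu⟩ := ihu; obtain ⟨v, hv⟩ := ihv
      exact ⟨.add u v, by simp only [Term.evalS, hu, hv]⟩
  | mul _ _ ihu ihv =>
      obtain ⟨u, hu⟩ := ihu; obtain ⟨v, hv⟩ := ihv
      exact ⟨.mul u v, by simp only [Term.evalS, hu, hv]⟩

end Coincidence

/-- **Coincidence lemma.** A series is `P`-finite iff it is recognised by a
finite-variable `P`-automaton. -/
theorem coincidence_lemma {A : Type} [Fintype A]
    (P : Term (Fin 4)) (m : Series A → Series A → Series A) (hm : IsPProduct P m)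
    (f : Series A) :
    PFinite m f ↔
      ∃ (k : ℕ) (𝒜 : PAutomaton A (Fin k)) (x : Fin k), asem P 𝒜 (.var x) = f := by
  constructor
  · rintro ⟨k, g, hg0, hder⟩
    choose tr htr using fun (a : A) (i : Fin (k + 1)) => inAlg_exists_term g (hder i a)
    refine ⟨k + 1, ⟨fun i => g i [], tr⟩, 0, ?_⟩
    set 𝒜 : PAutomaton A (Fin (k + 1)) := ⟨fun i => g i [], tr⟩ with h𝒜
    have hD : ∀ (n : ℕ) (w : List A), w.length ≤ n → ∀ i,
        asem P 𝒜 (.var i) w = g i w := by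
      intro n
      induction n with
      | zero =>
          intro w hw i
          have hwnil : w = [] := List.length_eq_zero_iff.mp (Nat.le_zero.mp hw)
          subst hwnil
          rfl
      | succ n ihn =>
          intro w hw i
          match w with
          | [] => exact ihn [] (by simp) i
          | a :: w' =>
              have hw' : w'.length ≤ n := by simpa using hw
              have e1 : asem P 𝒜 (.var i) (a :: w') = asem P 𝒜 (tr a i) w' := rfl
              rw [e1, asem_key hm 𝒜 w'.length w' le_rfl]
              have e2 := eLoc (mLoc hm n) (tr a i)
                (fun y w hw => ihn w hw y) w' hw'
              rw [e2, htr a i]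
              rfl
    funext w
    rw [hD w.length w le_rfl 0, hg0]
  · rintro ⟨k, 𝒜, x, hx⟩
    set g : Fin (k + 1) → Series A :=
      Fin.cases (asem P 𝒜 (.var x)) (fun j => asem P 𝒜 (.var j)) with hgdef
    have hmem : ∀ u : Term (Fin k), InAlg m (Set.range g) (asem P 𝒜 u) := by
      intro u
      induction u with
      | var y =>
          refine InAlg.gen ⟨y.succ, ?_⟩
          simp [hgdef]
      | zero =>
          have h0 : asem P 𝒜 (.zero : Term (Fin k)) = 0 := by rw [asem_eq hm]; rfl
          rw [h0]; exact .zero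
      | smul c u ih =>
          have h1 : asem P 𝒜 (.smul c u) = c • asem P 𝒜 u := by
            rw [asem_eq hm 𝒜 (.smul c u), asem_eq hm 𝒜 u]; rfl
          rw [h1]; exact .smul c ih
      | add u v ihu ihv =>
          have h1 : asem P 𝒜 (.add u v) = asem P 𝒜 u + asem P 𝒜 v := by
            rw [asem_eq hm 𝒜 (.add u v), asem_eq hm 𝒜 u, asem_eq hm 𝒜 v]; rfl
          rw [h1]; exact .add ihu ihv
      | mul u v ihu ihv =>
          have h1 : asem P 𝒜 (.mul u v) = m (asem P 𝒜 u) (asem P 𝒜 v) := by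
            rw [asem_eq hm 𝒜 (.mul u v), asem_eq hm 𝒜 u, asem_eq hm 𝒜 v]; rfl
          rw [h1]; exact .mul ihu ihv
    refine ⟨k, g, by simp [hgdef, hx], ?_⟩
    intro i a
    induction i using Fin.cases with
    | zero =>
        have h1 : deriv a (g 0) = asem P 𝒜 (𝒜.tr a x) := by
          simp only [hgdef, Fin.cases_zero]; rfl
        rw [h1]; exact hmem _
    | succ j =>
        have h1 : deriv a (g j.succ) = asem P 𝒜 (𝒜.tr a j) := by
          simp only [hgdef, Fin.cases_succ]; rfl
        rw [h1]; exact hmem _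


end PSeries
end

section
/- Associativity identities: Let P be a product rule in bilinear form, P ≈ α·(x*y) + β₁·(x*ẏ) + β₂·(ẋ*y) + γ·(ẋ*ẏ) with α, β₁, β₂, γ ∈ ℚ. Then P satisfies the associativity identity P(x, ẋ, y*z, P(y,ẏ,z,ż)) ≈ P(x*y, P(x,ẋ,y,ẏ), z, ż) if, and only if, the parameters satisfy α·(β₁ − β₂) = 0, γ·(β₁ − β₂) = 0, α·γ = β₁·(β₁ − 1), and α·γ = β₂·(β₂ − 1). -/
namespace PSeries

/-- The bilinear form `α·(x*y) + β₁·(x*ẏ) + β₂·(ẋ*y) + γ·(ẋ*ẏ)` as a term over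
`x = 0, ẋ = 1, y = 2, ẏ = 3`. -/
def bilinearForm (a b1 b2 c : ℚ) : Term (Fin 4) :=
  .add (.smul a (.mul (.var 0) (.var 2)))
    (.add (.smul b1 (.mul (.var 0) (.var 3)))
      (.add (.smul b2 (.mul (.var 1) (.var 2)))
        (.smul c (.mul (.var 1) (.var 3)))))

/-- Left-hand side `P(x, ẋ, y*z, P(y, ẏ, z, ż))` of the associativity identity,
over the variables `x = 0, ẋ = 1, y = 2, ẏ = 3, z = 4, ż = 5`. -/
def assocLHS (P : Term (Fin 4)) : Term (Fin 6) :=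
  P.subst (![.var 0, .var 1, .mul (.var 2) (.var 4),
    P.subst (![.var 2, .var 3, .var 4, .var 5] : Fin 4 → Term (Fin 6))] :
    Fin 4 → Term (Fin 6))

/-- Right-hand side `P(x*y, P(x, ẋ, y, ẏ), z, ż)` of the associativity identity. -/
def assocRHS (P : Term (Fin 4)) : Term (Fin 6) :=
  P.subst (![.mul (.var 0) (.var 2),
    P.subst (![.var 0, .var 1, .var 2, .var 3] : Fin 4 → Term (Fin 6)), .var 4, .var 5] :
    Fin 4 → Term (Fin 6))

/-! ### Auxiliary machinery for the associativity theorem -/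

theorem TEq.subst_congr {X Y : Type} {u v : Term X} (h : TEq u v) (ρ : X → Term Y) :
    TEq (u.subst ρ) (v.subst ρ) := by
  induction h with
  | refl u => exact .refl _
  | symm _ ih => exact ih.symm
  | trans _ _ ih1 ih2 => exact ih1.trans ih2
  | smul_congr c _ ih => exact .smul_congr c ih
  | add_congr _ _ ih1 ih2 => exact .add_congr ih1 ih2
  | mul_congr _ _ ih1 ih2 => exact .mul_congr ih1 ih2
  | one_smul u => exact .one_smul _
  | smul_smul c d u => exact .smul_smul c d _
  | add_smul c d u => exact .add_smul c d _
  | smul_add c u v => exact .smul_add c _ _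
  | add_zero u => exact .add_zero _
  | add_assoc u v w => exact .add_assoc _ _ _
  | add_comm u v => exact .add_comm _ _
  | neg_cancel u => exact .neg_cancel _
  | mul_addl u v w => exact .mul_addl _ _ _
  | mul_smull c u v => exact .mul_smull c _ _
  | mul_assoc u v w => exact .mul_assoc _ _ _
  | mul_comm u v => exact .mul_comm _ _

theorem Term.subst_congr_env {X Y : Type} (u : Term X) {ρ ρ' : X → Term Y}
    (h : ∀ x, TEq (ρ x) (ρ' x)) : TEq (u.subst ρ) (u.subst ρ') := by
  induction u with
  | var x => exact h x
  | zero => exact .refl _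
  | smul c u ih => exact .smul_congr c ih
  | add u v ih1 ih2 => exact .add_congr ih1 ih2
  | mul u v ih1 ih2 => exact .mul_congr ih1 ih2

theorem TEq.evalQ_eq {X : Type} {u v : Term X} (h : TEq u v) (F : X → ℚ) :
    u.evalQ F = v.evalQ F := by
  induction h with
  | refl u => rfl
  | symm _ ih => exact ih.symm
  | trans _ _ ih1 ih2 => exact ih1.trans ih2
  | smul_congr c _ ih => simp [Term.evalQ, ih]
  | add_congr _ _ ih1 ih2 => simp [Term.evalQ, ih1, ih2]
  | mul_congr _ _ ih1 ih2 => simp [Term.evalQ, ih1, ih2]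
  | _ => simp [Term.evalQ]; try ring

instance termSetoid (X : Type) : Setoid (Term X) :=
  ⟨TEq, ⟨.refl, fun h => h.symm, fun h h' => h.trans h'⟩⟩

/-- The quotient of terms by the congruence `TEq`. -/
def TQ (X : Type) : Type := Quotient (termSetoid X)

namespace TQ

variable {X : Type}

def mk (u : Term X) : TQ X := Quotient.mk (termSetoid X) u

instance : Zero (TQ X) := ⟨mk .zero⟩
instance : Add (TQ X) := ⟨Quotient.map₂ .add (fun _ _ h _ _ h' => TEq.add_congr h h')⟩
instance : Mul (TQ X) := ⟨Quotient.map₂ .mul (fun _ _ h _ _ h' => TEq.mul_congr h h')⟩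
instance : SMul ℚ (TQ X) := ⟨fun c => Quotient.map (.smul c) (fun _ _ h => TEq.smul_congr c h)⟩

@[simp] lemma mk_zero : (mk .zero : TQ X) = 0 := rfl
@[simp] lemma mk_add (u v : Term X) : mk (.add u v) = mk u + mk v := rfl
@[simp] lemma mk_mul (u v : Term X) : mk (.mul u v) = mk u * mk v := rfl
@[simp] lemma mk_smul (c : ℚ) (u : Term X) : mk (.smul c u) = c • mk u := rfl

lemma sound {u v : Term X} (h : TEq u v) : mk u = mk v := Quotient.sound h

lemma exact {u v : Term X} (h : mk u = mk v) : TEq u v := Quotient.exact h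

/-- If `u ≈ u + u` then `u ≈ 0`. -/
theorem _root_.PSeries.TEq.of_double {u : Term X} (h : TEq u (.add u u)) : TEq u .zero :=
  ((((TEq.add_zero u).symm.trans
      (TEq.add_congr (.refl u) (TEq.neg_cancel u).symm)).trans
    (TEq.add_assoc u u _).symm).trans
    (TEq.add_congr h.symm (.refl _))).trans (TEq.neg_cancel u)

theorem _root_.PSeries.TEq.smul_zero' (c : ℚ) : TEq (Term.smul c .zero) (.zero : Term X) :=
  TEq.of_double ((TEq.smul_congr c (TEq.add_zero .zero).symm).trans (TEq.smul_add c _ _))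

theorem _root_.PSeries.TEq.zero_smul' (u : Term X) : TEq (.smul 0 u) .zero := by
  have h := TEq.add_smul 0 0 u
  norm_num at h
  exact TEq.of_double h

instance : AddCommMonoid (TQ X) where
  add_assoc a b c := Quotient.inductionOn₃ a b c fun u v w => sound (TEq.add_assoc u v w)
  add_comm a b := Quotient.inductionOn₂ a b fun u v => sound (TEq.add_comm u v)
  add_zero a := Quotient.inductionOn a fun u => sound (TEq.add_zero u)
  zero_add a := Quotient.inductionOn a fun u =>
    sound ((TEq.add_comm _ _).trans (TEq.add_zero u))
  nsmul := nsmulRec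

instance : Module ℚ (TQ X) where
  one_smul a := Quotient.inductionOn a fun u => sound (TEq.one_smul u)
  mul_smul c d a := Quotient.inductionOn a fun u => sound (TEq.smul_smul c d u).symm
  smul_zero c := sound (TEq.smul_zero' c)
  smul_add c a b := Quotient.inductionOn₂ a b fun u v => sound (TEq.smul_add c u v)
  add_smul c d a := Quotient.inductionOn a fun u => sound (TEq.add_smul c d u)
  zero_smul a := Quotient.inductionOn a fun u => sound (TEq.zero_smul' u)

lemma qmul_comm (p q : TQ X) : p * q = q * p :=
  Quotient.inductionOn₂ p q fun u v => sound (TEq.mul_comm u v)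

lemma qmul_assoc (p q r : TQ X) : p * q * r = p * (q * r) :=
  Quotient.inductionOn₃ p q r fun u v w => sound (TEq.mul_assoc u v w)

lemma qadd_mul (p q r : TQ X) : (p + q) * r = p * r + q * r :=
  Quotient.inductionOn₃ p q r fun u v w => sound (TEq.mul_addl u v w)

lemma qmul_add (p q r : TQ X) : p * (q + r) = p * q + p * r := by
  rw [qmul_comm, qadd_mul, qmul_comm q p, qmul_comm r p]

lemma qsmul_mul (c : ℚ) (p q : TQ X) : (c • p) * q = c • (p * q) :=
  Quotient.inductionOn₂ p q fun u v => sound (TEq.mul_smull c u v)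

lemma qmul_smul (c : ℚ) (p q : TQ X) : p * (c • q) = c • (p * q) := by
  rw [qmul_comm, qsmul_mul, qmul_comm q p]

end TQ

theorem vec6_four {α : Type*} (x0 x1 x2 x3 x4 x5 : α) : ![x0,x1,x2,x3,x4,x5] 4 = x4 := rfl
theorem vec6_five {α : Type*} (x0 x1 x2 x3 x4 x5 : α) : ![x0,x1,x2,x3,x4,x5] 5 = x5 := rfl

theorem bilinear_assoc_of_params (a b1 b2 c : ℚ)
    (h1 : a * (b1 - b2) = 0) (h2 : c * (b1 - b2) = 0)
    (h3 : a * c = b1 * (b1 - 1)) (h4 : a * c = b2 * (b2 - 1)) :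
    TEq (assocLHS (bilinearForm a b1 b2 c)) (assocRHS (bilinearForm a b1 b2 c)) := by
  apply TQ.exact
  simp only [assocLHS, assocRHS, bilinearForm, Term.subst, Matrix.cons_val_zero,
    Matrix.cons_val_one, Matrix.head_cons, Matrix.cons_val_two, Matrix.tail_cons,
    Matrix.cons_val_three, TQ.mk_add, TQ.mk_mul, TQ.mk_smul]
  simp only [TQ.qmul_add, TQ.qadd_mul, TQ.qsmul_mul, TQ.qmul_smul, TQ.qmul_assoc]
  match_scalars
  · linear_combination h1
  · linear_combination -h3
  · ring
  · ring
  · linear_combination h4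
  · linear_combination h2
  · ring
  · ring

/-- **Associativity identities.** A product rule in bilinear form satisfies the
associativity identity iff its parameters satisfy the four identities below. -/
theorem associativity_identities (P : Term (Fin 4)) (a b1 b2 c : ℚ)
    (hform : TEq P (bilinearForm a b1 b2 c)) :
    TEq (assocLHS P) (assocRHS P) ↔
      (a * (b1 - b2) = 0 ∧ c * (b1 - b2) = 0 ∧
       a * c = b1 * (b1 - 1) ∧ a * c = b2 * (b2 - 1)) := by
  set B := bilinearForm a b1 b2 c with hB
  have hLHS : TEq (assocLHS P) (assocLHS B) := by
    refine (TEq.subst_congr hform _).trans (Term.subst_congr_env B ?_)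
    intro x
    fin_cases x
    · exact .refl _
    · exact .refl _
    · exact .refl _
    · exact TEq.subst_congr hform _
  have hRHS : TEq (assocRHS P) (assocRHS B) := by
    refine (TEq.subst_congr hform _).trans (Term.subst_congr_env B ?_)
    intro x
    fin_cases x
    · exact .refl _
    · exact TEq.subst_congr hform _
    · exact .refl _
    · exact .refl _
  constructor
  · intro h
    have hBe : TEq (assocLHS B) (assocRHS B) := hLHS.symm.trans (h.trans hRHS)
    have e1 := hBe.evalQ_eq ![1, 0, 1, 0, 1, 0]
    have e2 := hBe.evalQ_eq ![1, 0, 1, 0, 0, 1]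
    have e3 := hBe.evalQ_eq ![0, 1, 1, 0, 1, 0]
    have e4 := hBe.evalQ_eq ![0, 1, 1, 0, 0, 1]
    simp only [hB, assocLHS, assocRHS, bilinearForm, Term.subst, Term.evalQ,
      Matrix.cons_val_zero, Matrix.cons_val_one, Matrix.head_cons, Matrix.cons_val_two,
      Matrix.tail_cons, Matrix.cons_val_three, vec6_four, vec6_five] at e1 e2 e3 e4
    exact ⟨by linear_combination e1, by linear_combination e4,
      by linear_combination -e2, by linear_combination e3⟩
  · rintro ⟨h1, h2, h3, h4⟩
    exact hLHS.trans ((bilinear_assoc_of_params a b1 b2 c h1 h2 h3 h4).trans hRHS.symm)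

end PSeries
end

section
/- Multiplicative identity theorem: Let P be a simple product rule with parameters α, β, γ ∈ ℚ (so α·γ = β·(β−1) and P ≈ α·xy + β·(xẏ + ẋy) + γ·ẋẏ), and let * be its P-product. Call P degenerate if β = 0 and γ = 0. Then * has a multiplicative identity (a series 𝟙 with f*𝟙 = 𝟙*f = f for every series f) if, and only if, P is nondegenerate; moreover, when P is nondegenerate there exists a constant η ∈ ℚ such that the unique series 𝟙 with 𝟙(ε) = 1 and δ_a 𝟙 = η·𝟙 for every a ∈ Σ is a multiplicative identity for *. -/
namespace PSeries

/-- The simple form `α·(x*y) + β·(x*ẏ + ẋ*y) + γ·(ẋ*ẏ)` as a term over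
`x = 0, ẋ = 1, y = 2, ẏ = 3`. -/
def simpleForm (a b c : ℚ) : Term (Fin 4) :=
  .add (.smul a (.mul (.var 0) (.var 2)))
    (.add (.smul b (.add (.mul (.var 0) (.var 3)) (.mul (.var 1) (.var 2))))
      (.smul c (.mul (.var 1) (.var 3))))
/-! The `P`-product is determined by `P` up to `≈`, so `*` is the explicit product `simpleProd`
defined by the recursion of the simple form; the constraint `αγ = β(β - 1)` is what makes
it associative. Against a series with `δ_a 𝟙 = η·𝟙` that recursion reads
`δ_a (f * 𝟙) = (α + βη)·(f * 𝟙) + (β + γη)·(δ_a f * 𝟙)`, so `𝟙` is a right identity as soon as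
`α + βη = 0` and `β + γη = 1`, and such an `η` exists iff `(β, γ) ≠ (0, 0)`.
In the degenerate case `(f * g)(w) = α^|w| f(ε) g(ε)` forgets everything but `f(ε)`. -/

section Uniqueness

variable {A : Type}

def EqUpTo (n : ℕ) (f g : Series A) : Prop := ∀ w : List A, w.length ≤ n → f w = g w

lemma EqUpTo.deriv {n : ℕ} {f g : Series A} (h : EqUpTo (n + 1) f g) (x : A) :
    EqUpTo n (deriv x f) (deriv x g) :=
  fun w hw => h (x :: w) (by simpa using hw)

lemma EqUpTo.of_succ {n : ℕ} {f g : Series A} (h : EqUpTo (n + 1) f g) : EqUpTo n f g :=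
  fun w hw => h w (by omega)

lemma Term.evalS_eqUpTo {X : Type} {n : ℕ} {m₁ m₂ : Series A → Series A → Series A}
    (hm : ∀ f₁ f₂ g₁ g₂, EqUpTo n f₁ f₂ → EqUpTo n g₁ g₂ → EqUpTo n (m₁ f₁ g₁) (m₂ f₂ g₂))
    (u : Term X) {ρ₁ ρ₂ : X → Series A} (hρ : ∀ i, EqUpTo n (ρ₁ i) (ρ₂ i)) :
    EqUpTo n (u.evalS m₁ ρ₁) (u.evalS m₂ ρ₂) := by
  induction u with
  | var i => exact hρ i
  | zero => exact fun _ _ => rfl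
  | smul q u ih => exact fun w hw => congrArg (q * ·) (ih w hw)
  | add u v ihu ihv => exact fun w hw => congrArg₂ (· + ·) (ihu w hw) (ihv w hw)
  | mul u v ihu ihv => exact hm _ _ _ _ ihu ihv

lemma IsPProduct.eqUpTo {P : Term (Fin 4)} {m₁ m₂ : Series A → Series A → Series A}
    (h₁ : IsPProduct P m₁) (h₂ : IsPProduct P m₂) (n : ℕ) (f₁ f₂ g₁ g₂ : Series A)
    (hf : EqUpTo n f₁ f₂) (hg : EqUpTo n g₁ g₂) : EqUpTo n (m₁ f₁ g₁) (m₂ f₂ g₂) := by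
  induction n generalizing f₁ f₂ g₁ g₂ with
  | zero =>
    rintro (_ | _) hw
    · rw [h₁.1, h₂.1, hf [] le_rfl, hg [] le_rfl]
    · simp at hw
  | succ n ih =>
    rintro (_ | ⟨x, w⟩) hw
    · rw [h₁.1, h₂.1, hf [] (Nat.zero_le _), hg [] (Nat.zero_le _)]
    · have hargs : ∀ i, EqUpTo n (![f₁, deriv x f₁, g₁, deriv x g₁] i)
          (![f₂, deriv x f₂, g₂, deriv x g₂] i) := by
        intro i
        fin_cases i
        exacts [hf.of_succ, hf.deriv x, hg.of_succ, hg.deriv x]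
      have hP := Term.evalS_eqUpTo ih P hargs w (by simpa using hw)
      rwa [← h₁.2, ← h₂.2] at hP

theorem IsPProduct.unique {P : Term (Fin 4)} {m₁ m₂ : Series A → Series A → Series A}
    (h₁ : IsPProduct P m₁) (h₂ : IsPProduct P m₂) : m₁ = m₂ := by
  funext f g w
  exact h₁.eqUpTo h₂ w.length f f g g (fun _ _ => rfl) (fun _ _ => rfl) w le_rfl

end Uniqueness

lemma Term.evalS_eq_of_TEq {A X : Type} {m : Series A → Series A → Series A} (hm : IsBAC m)
    {u v : Term X} (h : TEq u v) (ρ : X → Series A) : u.evalS m ρ = v.evalS m ρ := by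
  obtain ⟨hadd, hsmul, -, -, hassoc, hcomm⟩ := hm
  induction h with
  | refl u => rfl
  | symm _ ih => exact ih.symm
  | trans _ _ ih₁ ih₂ => exact ih₁.trans ih₂
  | smul_congr q _ ih => simp only [Term.evalS, ih]
  | add_congr _ _ ih₁ ih₂ => simp only [Term.evalS, ih₁, ih₂]
  | mul_congr _ _ ih₁ ih₂ => simp only [Term.evalS, ih₁, ih₂]
  | one_smul u => simp only [Term.evalS, one_smul]
  | smul_smul q d u => simp only [Term.evalS, smul_smul]
  | add_smul q d u => simp only [Term.evalS, add_smul]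
  | smul_add q u v => simp only [Term.evalS, smul_add]
  | add_zero u => simp only [Term.evalS, add_zero]
  | add_assoc u v w => simp only [Term.evalS, add_assoc]
  | add_comm u v => exact add_comm _ _
  | neg_cancel u => simp only [Term.evalS, neg_one_smul, add_neg_cancel]
  | mul_addl u v w => simp only [Term.evalS, hadd]
  | mul_smull q u v => simp only [Term.evalS, hsmul]
  | mul_assoc u v w => simp only [Term.evalS, hassoc]
  | mul_comm u v => exact hcomm _ _

lemma IsPProduct.of_TEq {A : Type} {P Q : Term (Fin 4)} {m : Series A → Series A → Series A}
    (hm : IsBAC m) (hPQ : TEq P Q) (hQ : IsPProduct Q m) : IsPProduct P m :=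
  ⟨hQ.1, fun f g x => by rw [Term.evalS_eq_of_TEq hm hPQ]; exact hQ.2 f g x⟩

section SimpleProd

@[simp] lemma deriv_apply {A : Type} (x : A) (f : Series A) (w : List A) :
    deriv x f w = f (x :: w) := rfl

@[simp] lemma deriv_add {A : Type} (x : A) (f g : Series A) :
    deriv x (f + g) = deriv x f + deriv x g := rfl

@[simp] lemma deriv_smul {A : Type} (x : A) (q : ℚ) (f : Series A) :
    deriv x (q • f) = q • deriv x f := rfl

variable {A : Type} (a b c : ℚ)

def simpleProd : Series A → Series A → Series A
  | f, g, [] => f [] * g []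
  | f, g, x :: w =>
      a * simpleProd f g w
        + (b * (simpleProd f (deriv x g) w + simpleProd (deriv x f) g w)
          + c * simpleProd (deriv x f) (deriv x g) w)

variable {a b c}

@[simp] lemma simpleProd_nil (f g : Series A) : simpleProd a b c f g [] = f [] * g [] := rfl

lemma simpleProd_cons (f g : Series A) (x : A) (w : List A) :
    simpleProd a b c f g (x :: w) =
      a * simpleProd a b c f g w
        + (b * (simpleProd a b c f (deriv x g) w + simpleProd a b c (deriv x f) g w)
          + c * simpleProd a b c (deriv x f) (deriv x g) w) := rfl

lemma deriv_simpleProd (x : A) (f g : Series A) :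
    deriv x (simpleProd a b c f g) =
      a • simpleProd a b c f g
        + (b • (simpleProd a b c f (deriv x g) + simpleProd a b c (deriv x f) g)
          + c • simpleProd a b c (deriv x f) (deriv x g)) :=
  rfl

lemma simpleProd_add_left (f g h : Series A) :
    simpleProd a b c (f + g) h = simpleProd a b c f h + simpleProd a b c g h := by
  funext w
  induction w generalizing f g h with
  | nil => simp only [simpleProd_nil, Pi.add_apply]; ring
  | cons x w ih => simp only [simpleProd_cons, deriv_add, Pi.add_apply, ih]; ring

lemma simpleProd_smul_left (q : ℚ) (f g : Series A) :
    simpleProd a b c (q • f) g = q • simpleProd a b c f g := by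
  funext w
  induction w generalizing f g with
  | nil => simp only [simpleProd_nil, Pi.smul_apply, smul_eq_mul]; ring
  | cons x w ih => simp only [simpleProd_cons, deriv_smul, Pi.smul_apply, smul_eq_mul, ih]; ring

lemma simpleProd_comm (f g : Series A) : simpleProd a b c f g = simpleProd a b c g f := by
  funext w
  induction w generalizing f g with
  | nil => exact mul_comm _ _
  | cons x w ih => simp only [simpleProd_cons, ih f, ih (deriv x f)]; ring

lemma simpleProd_add_right (f g h : Series A) :
    simpleProd a b c f (g + h) = simpleProd a b c f g + simpleProd a b c f h := by
  simp only [simpleProd_comm f, simpleProd_add_left]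

lemma simpleProd_smul_right (q : ℚ) (f g : Series A) :
    simpleProd a b c f (q • g) = q • simpleProd a b c f g := by
  simp only [simpleProd_comm f, simpleProd_smul_left]

lemma simpleProd_assoc (habc : a * c = b * (b - 1)) (f g h : Series A) :
    simpleProd a b c (simpleProd a b c f g) h = simpleProd a b c f (simpleProd a b c g h) := by
  funext w
  induction w generalizing f g h with
  | nil => exact mul_assoc _ _ _
  | cons x w ih =>
    simp only [simpleProd_cons, deriv_simpleProd, simpleProd_add_left, simpleProd_add_right,
      simpleProd_smul_left, simpleProd_smul_right, Pi.add_apply, Pi.smul_apply, smul_eq_mul, ih]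
    linear_combination (simpleProd a b c f (simpleProd a b c g (deriv x h)) w
      - simpleProd a b c (deriv x f) (simpleProd a b c g h) w) * habc

lemma isBAC_simpleProd (habc : a * c = b * (b - 1)) : IsBAC (simpleProd a b c (A := A)) :=
  ⟨simpleProd_add_left, simpleProd_smul_left, simpleProd_add_right, simpleProd_smul_right,
    simpleProd_assoc habc, simpleProd_comm⟩

lemma isPProduct_simpleForm_simpleProd :
    IsPProduct (simpleForm a b c) (simpleProd a b c (A := A)) :=
  ⟨fun _ _ => rfl, fun f g x => by rw [deriv_simpleProd]; rfl⟩

lemma simpleProd_eq_self_of_deriv_eq_smul {η : ℚ} (hα : a + b * η = 0) (hβ : b + c * η = 1)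
    {e : Series A} (he₀ : e [] = 1) (he : ∀ x, deriv x e = η • e) (f : Series A) :
    simpleProd a b c f e = f := by
  funext w
  induction w generalizing f with
  | nil => simp [he₀]
  | cons x w ih =>
    rw [simpleProd_cons, he x, simpleProd_smul_right, simpleProd_smul_right, Pi.smul_apply,
      Pi.smul_apply, smul_eq_mul, smul_eq_mul, ih (deriv x f), deriv_apply]
    linear_combination simpleProd a b c f e w * hα + f (x :: w) * hβ

lemma simpleProd_zero_zero_apply (f g : Series A) (w : List A) :
    simpleProd a 0 0 f g w = a ^ w.length * (f [] * g []) := by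
  induction w generalizing f g with
  | nil => simp
  | cons x w ih => simp only [simpleProd_cons, ih, List.length_cons, pow_succ]; ring

lemma not_exists_right_identity_simpleProd_zero_zero [Nonempty A] :
    ¬∃ e : Series A, ∀ f, simpleProd a 0 0 f e = f := by
  rintro ⟨e, he⟩
  obtain ⟨x⟩ := ‹Nonempty A›
  have := congrFun (he fun w => (w.length : ℚ)) [x]
  simp [simpleProd_zero_zero_apply] at this

end SimpleProd

lemma exists_eta_of_nondegenerate {a b c : ℚ} (habc : a * c = b * (b - 1))
    (hbc : ¬(b = 0 ∧ c = 0)) : ∃ η : ℚ, a + b * η = 0 ∧ b + c * η = 1 := by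
  by_cases hc : c = 0
  · have hb : b = 1 := by
      have : b * (b - 1) = 0 := by rw [← habc, hc, mul_zero]
      rcases mul_eq_zero.mp this with hb | hb
      · exact absurd ⟨hb, hc⟩ hbc
      · linarith
    exact ⟨-a, by rw [hb]; ring, by rw [hb, hc]; ring⟩
  · refine ⟨(1 - b) / c, ?_, by field_simp; ring⟩
    field_simp
    linear_combination habc

theorem multiplicative_identity_general {A : Type} [Nonempty A]
    (P : Term (Fin 4)) (a b c : ℚ) (habc : a * c = b * (b - 1))
    (hform : TEq P (simpleForm a b c))
    (m : Series A → Series A → Series A) (hm : IsPProduct P m) :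
    ((∃ e : Series A, ∀ f : Series A, m f e = f ∧ m e f = f) ↔ ¬(b = 0 ∧ c = 0)) ∧
    (¬(b = 0 ∧ c = 0) →
      ∃ η : ℚ, ∀ e : Series A,
        (e [] = 1 ∧ ∀ x : A, deriv x e = η • e) →
        ∀ f : Series A, m f e = f ∧ m e f = f) := by
  obtain rfl : m = simpleProd a b c := hm.unique <|
    .of_TEq (isBAC_simpleProd habc) hform isPProduct_simpleForm_simpleProd
  have hid : ¬(b = 0 ∧ c = 0) → ∃ η : ℚ, ∀ e : Series A,
      (e [] = 1 ∧ ∀ x : A, deriv x e = η • e) →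
      ∀ f : Series A, simpleProd a b c f e = f ∧ simpleProd a b c e f = f := by
    intro hbc
    obtain ⟨η, hα, hβ⟩ := exists_eta_of_nondegenerate habc hbc
    refine ⟨η, fun e ⟨he₀, he⟩ f => ?_⟩
    have hfe := simpleProd_eq_self_of_deriv_eq_smul hα hβ he₀ he f
    exact ⟨hfe, (simpleProd_comm e f).trans hfe⟩
  refine ⟨⟨fun ⟨e, he⟩ ⟨hb, hc⟩ => ?_, fun hbc => ?_⟩, hid⟩
  · subst hb hc
    exact not_exists_right_identity_simpleProd_zero_zero ⟨e, fun f => (he f).1⟩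
  · obtain ⟨η, hη⟩ := hid hbc
    refine ⟨fun w => η ^ w.length, hη _ ⟨pow_zero η, fun x => ?_⟩⟩
    funext w
    simp [pow_succ, mul_comm]

/-- **Multiplicative identity theorem.** A simple product has a multiplicative identity
iff it is nondegenerate (`¬(β = 0 ∧ γ = 0)`); moreover, in the nondegenerate case there
is a constant `η` such that the unique series `𝟙` with `𝟙(ε) = 1` and `δ_a 𝟙 = η·𝟙`
is a multiplicative identity. -/
theorem multiplicative_identity {A : Type} [Fintype A] [Nonempty A]
    (P : Term (Fin 4)) (a b c : ℚ) (habc : a * c = b * (b - 1))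
    (hform : TEq P (simpleForm a b c))
    (m : Series A → Series A → Series A) (hm : IsPProduct P m) :
    ((∃ e : Series A, ∀ f : Series A, m f e = f ∧ m e f = f) ↔ ¬(b = 0 ∧ c = 0)) ∧
    (¬(b = 0 ∧ c = 0) →
      ∃ η : ℚ, ∀ e : Series A,
        (e [] = 1 ∧ ∀ x : A, deriv x e = η • e) →
        ∀ f : Series A, m f e = f ∧ m e f = f) :=
  multiplicative_identity_general P a b c habc hform m hm

end PSeries
end
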